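/- arXiv:2408.09997 — 8 statements merged into one kernel-verified Lean document; each statement's English description precedes it below -/
import Mathlib

section
/- The underlying undirected graph of any two-colored quasi best match graph (2-qBMG) contains no induced path on 6 vertices (it is P6-free). -/
def QN1 {V : Type*} (E : V → V → Prop) : Prop :=
  ∀ u v, u ≠ v → ¬ E u v → ¬ E v u → ¬ ∃ w t, E u t ∧ E v w ∧ E t w

def QN2 {V : Type*} (E : V → V → Prop) : Prop :=
  ∀ u v w t, E u v → E v w → E w t → E u t

def QN3 {V : Type*} (E : V → V → Prop) : Prop :=
  ∀ u v, (∃ w, E u w ∧ E v w) → (∀ w, E u w → E v w) ∨ (∀ w, E v w → E u w)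

def QBip {V : Type*} (c : V → Bool) (E : V → V → Prop) : Prop :=
  ∀ u v, E u v → c u ≠ c v

/-- A 2-colored quasi best match graph: bipartite digraph satisfying (N1), (N2), (N3). -/
def IsQBMG {V : Type*} (c : V → Bool) (E : V → V → Prop) : Prop :=
  QBip c E ∧ QN1 E ∧ QN2 E ∧ QN3 E

/-- Adjacency in the underlying undirected graph. -/
def QAdj {V : Type*} (E : V → V → Prop) (u v : V) : Prop := E u v ∨ E v u

/-!
In an induced path `x₀ x₁ x₂ x₃` of a digraph satisfying (N1) and (N2) the arcs `x₀x₁`, `x₁x₂`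
cannot both exist: an arc `x₂x₃` would give `x₀x₃` by (N2), an arc `x₃x₂` violates (N1).
Applying this to induced `P₄`s inside an induced `P₅` `x₀ … x₄`, a missing arc `x₂x₃`
forces the arcs `x₁x₀`, `x₁x₂`, `x₃x₂`, `x₃x₄`, which (N3) forbids. So in an induced `P₆`
`x₀ … x₅` both `x₂x₃` and `x₃x₄` are arcs, contradicting the first fact for `x₂ x₃ x₄ x₅`.
-/

section InducedPath

variable {V : Type*} {E : V → V → Prop}

def IsInducedPath {n : ℕ} (E : V → V → Prop) (x : Fin n → V) : Prop :=
  Function.Injective x ∧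
    ∀ i j : Fin n, QAdj E (x i) (x j) ↔ (i.val + 1 = j.val ∨ j.val + 1 = i.val)

namespace IsInducedPath

variable {n : ℕ}

theorem qAdj {x : Fin n → V} (hx : IsInducedPath E x) {i j : Fin n} (hij : i.val + 1 = j.val) :
    QAdj E (x i) (x j) :=
  (hx.2 i j).2 (Or.inl hij)

theorem not_arc {x : Fin n → V} (hx : IsInducedPath E x) {i j : Fin n}
    (hij : ¬(i.val + 1 = j.val ∨ j.val + 1 = i.val)) : ¬ E (x i) (x j) :=
  fun hE => hij ((hx.2 i j).1 (Or.inl hE))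

theorem comp_castSucc {x : Fin (n + 1) → V} (hx : IsInducedPath E x) :
    IsInducedPath E (x ∘ Fin.castSucc) :=
  ⟨hx.1.comp (Fin.castSucc_injective n), fun i j => by simpa using hx.2 i.castSucc j.castSucc⟩

theorem comp_succ {x : Fin (n + 1) → V} (hx : IsInducedPath E x) :
    IsInducedPath E (x ∘ Fin.succ) :=
  ⟨hx.1.comp (Fin.succ_injective n), fun i j => by simpa using hx.2 i.succ j.succ⟩

theorem comp_rev {x : Fin n → V} (hx : IsInducedPath E x) : IsInducedPath E (x ∘ Fin.rev) := by
  refine ⟨hx.1.comp Fin.rev_injective, fun i j => ?_⟩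
  rw [Function.comp_apply, Function.comp_apply, hx.2, Fin.val_rev, Fin.val_rev]
  omega

theorem not_arc_arc (h1 : QN1 E) (h2 : QN2 E) {x : Fin 4 → V} (hx : IsInducedPath E x)
    (h01 : E (x 0) (x 1)) (h12 : E (x 1) (x 2)) : False := by
  have h03 : ¬ E (x 0) (x 3) := hx.not_arc (by decide)
  have h30 : ¬ E (x 3) (x 0) := hx.not_arc (by decide)
  rcases hx.qAdj (i := 2) (j := 3) rfl with h23 | h32
  · exact h03 (h2 _ _ _ _ h01 h12 h23)
  · exact h1 _ _ (hx.1.ne (by decide)) h03 h30 ⟨x 2, x 1, h01, h32, h12⟩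

theorem arc_two_three (h1 : QN1 E) (h2 : QN2 E) (h3 : QN3 E) {x : Fin 5 → V}
    (hx : IsInducedPath E x) : E (x 2) (x 3) := by
  by_contra h23
  have h32 : E (x 3) (x 2) := (hx.qAdj (i := 2) (j := 3) rfl).resolve_left h23
  have h12 : E (x 1) (x 2) := (hx.qAdj (i := 1) (j := 2) rfl).resolve_right
    fun h21 => hx.comp_castSucc.comp_rev.not_arc_arc h1 h2 h32 h21
  have h10 : E (x 1) (x 0) := (hx.qAdj (i := 0) (j := 1) rfl).resolve_left
    fun h01 => hx.comp_castSucc.not_arc_arc h1 h2 h01 h12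
  have h34 : E (x 3) (x 4) := (hx.qAdj (i := 3) (j := 4) rfl).resolve_right
    fun h43 => hx.comp_succ.comp_rev.not_arc_arc h1 h2 h43 h32
  rcases h3 (x 1) (x 3) ⟨x 2, h12, h32⟩ with h | h
  · exact hx.not_arc (i := 3) (j := 0) (by decide) (h _ h10)
  · exact hx.not_arc (i := 1) (j := 4) (by decide) (h _ h34)

end IsInducedPath

end InducedPath

theorem P6_free {V : Type*} (c : V → Bool) (E : V → V → Prop) (h : IsQBMG c E) :
    ¬ ∃ f : Fin 6 → V, Function.Injective f ∧
      ∀ i j : Fin 6, QAdj E (f i) (f j) ↔ (i.val + 1 = j.val ∨ j.val + 1 = i.val) := by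
  obtain ⟨-, h1, h2, h3⟩ := h
  rintro ⟨f, hf⟩
  have hf : IsInducedPath E f := hf
  have h23 : E (f 2) (f 3) := hf.comp_castSucc.arc_two_three h1 h2 h3
  have h34 : E (f 3) (f 4) := hf.comp_succ.arc_two_three h1 h2 h3
  exact hf.comp_succ.comp_succ.not_arc_arc h1 h2 h23 h34
end

section
/- The underlying undirected graph of any two-colored quasi best match graph (2-qBMG) contains no induced cycle on 6 vertices (it is C6-free). -/
/-!
Orient the edges of an induced 6-cycle by `E`. Every three consecutive edges span an induced
path `a - b - c - d` whose ends are antipodal, and a directed `a → b → c` is impossible there: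
(N2) would turn `c → d` into an arc `a → d`, and (N1) forbids `a → b → c ← d`. Hence the
orientation alternates, so two sources `x, y` share a sink while each has an out-neighbour
antipodal to the other. Then neither out-neighbourhood contains the other, contradicting (N3).
-/

section

variable {V : Type*} {E : V → V → Prop}

theorem QAdj.symm {u v : V} (h : QAdj E u v) : QAdj E v u := Or.symm h

theorem not_dipath_in_induced_P4 (hN1 : QN1 E) (hN2 : QN2 E) {a b c d : V} (had : a ≠ d)
    (hnad : ¬ QAdj E a d) (hcd : QAdj E c d) (hab : E a b) (hbc : E b c) : False := by
  rcases hcd with hcd | hdc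
  · exact hnad (Or.inl (hN2 a b c d hab hbc hcd))
  · exact hN1 a d had (hnad ∘ Or.inl) (hnad ∘ Or.inr) ⟨c, b, hab, hdc, hbc⟩

structure IsInducedC6 (E : V → V → Prop) (f : Fin 6 → V) : Prop where
  adj_add_one : ∀ i, QAdj E (f i) (f (i + 1))
  ne_add_three : ∀ i, f i ≠ f (i + 3)
  not_adj_add_three : ∀ i, ¬ QAdj E (f i) (f (i + 3))

namespace IsInducedC6

variable {f : Fin 6 → V}

theorem of_adj_iff (hinj : Function.Injective f)
    (hadj : ∀ i j : Fin 6, QAdj E (f i) (f j) ↔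
      ((i.val + 1) % 6 = j.val ∨ (j.val + 1) % 6 = i.val)) :
    IsInducedC6 E f where
  adj_add_one i := (hadj i (i + 1)).mpr <| by revert i; decide
  ne_add_three i := hinj.ne <| by revert i; decide
  not_adj_add_three i h := (by decide : ∀ k : Fin 6,
    ¬ ((k.val + 1) % 6 = (k + 3).val ∨ ((k + 3).val + 1) % 6 = k.val)) i ((hadj i (i + 3)).mp h)

variable (hf : IsInducedC6 E f) (hN1 : QN1 E) (hN2 : QN2 E)
include hf hN1 hN2

theorem not_dipath_forward (i : Fin 6) : ¬ (E (f i) (f (i + 1)) ∧ E (f (i + 1)) (f (i + 2))) :=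
  fun ⟨h₁, h₂⟩ => not_dipath_in_induced_P4 hN1 hN2 (hf.ne_add_three i)
    (hf.not_adj_add_three i) (by simpa [add_assoc] using hf.adj_add_one (i + 2)) h₁
    (by simpa [add_assoc] using h₂)

theorem not_dipath_backward (i : Fin 6) :
    ¬ (E (f (i + 2)) (f (i + 1)) ∧ E (f (i + 1)) (f i)) := by
  rintro ⟨h₁, h₂⟩
  have hi : i + 5 + 1 = i := by grind
  have hend : i + 5 = i + 2 + 3 := by grind
  refine not_dipath_in_induced_P4 hN1 hN2 (hend ▸ hf.ne_add_three (i + 2))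
    (hend ▸ hf.not_adj_add_three (i + 2)) ?_ h₁ h₂
  simpa [hi] using (hf.adj_add_one (i + 5)).symm

theorem arc_from_add_two_of_arc {i : Fin 6} (h : E (f i) (f (i + 1))) :
    E (f (i + 2)) (f (i + 1)) :=
  (hf.adj_add_one (i + 1)).elim
    (fun h' => absurd ⟨h, by simpa [add_assoc] using h'⟩ (hf.not_dipath_forward hN1 hN2 i))
    (fun h' => by simpa [add_assoc] using h')

theorem arc_to_add_two_of_arc {i : Fin 6} (h : E (f (i + 1)) (f i)) :
    E (f (i + 1)) (f (i + 2)) :=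
  (hf.adj_add_one (i + 1)).elim
    (fun h' => by simpa [add_assoc] using h')
    (fun h' => absurd ⟨by simpa [add_assoc] using h', h⟩ (hf.not_dipath_backward hN1 hN2 i))

theorem arc_to_add_five_of_arc {i : Fin 6} (h : E (f i) (f (i + 1))) : E (f i) (f (i + 5)) := by
  have hi : i + 5 + 1 = i := by grind
  have hi' : i + 5 + 2 = i + 1 := by grind
  refine (hf.adj_add_one (i + 5)).elim (fun h' => ?_) (fun h' => by simpa [hi] using h')
  exact absurd ⟨by simpa [hi] using h', by simpa [hi, hi'] using h⟩
    (hf.not_dipath_forward hN1 hN2 (i + 5))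

theorem exists_arc_add_one : ∃ i, E (f i) (f (i + 1)) :=
  (hf.adj_add_one 0).elim (fun h => ⟨0, h⟩)
    (fun h => ⟨1, hf.arc_to_add_two_of_arc hN1 hN2 h⟩)

end IsInducedC6

end

theorem C6_free {V : Type*} (c : V → Bool) (E : V → V → Prop) (h : IsQBMG c E) :
    ¬ ∃ f : Fin 6 → V, Function.Injective f ∧
      ∀ i j : Fin 6, QAdj E (f i) (f j) ↔
        ((i.val + 1) % 6 = j.val ∨ (j.val + 1) % 6 = i.val) := by
  rintro ⟨f, hinj, hadj⟩
  obtain ⟨-, hN1, hN2, hN3⟩ := h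
  have hf := IsInducedC6.of_adj_iff hinj hadj
  obtain ⟨i, hi⟩ := hf.exists_arc_add_one hN1 hN2
  have hsink := hf.arc_from_add_two_of_arc hN1 hN2 hi
  have hnext : E (f (i + 2)) (f (i + 3)) := by
    have := hf.arc_to_add_two_of_arc hN1 hN2 (i := i + 1) (by simpa [add_assoc] using hsink)
    simpa [add_assoc] using this
  have hprev := hf.arc_to_add_five_of_arc hN1 hN2 hi
  rcases hN3 (f i) (f (i + 2)) ⟨f (i + 1), hi, hsink⟩ with hsub | hsub
  · exact hf.not_adj_add_three (i + 2) (Or.inl (by simpa [add_assoc] using hsub _ hprev))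
  · exact hf.not_adj_add_three i (Or.inl (hsub _ hnext))
end

section
/- Up to isomorphism, there are exactly six 2-qBMGs on five vertices {v1,...,v5} whose underlying undirected graph is the chordless path v1v2v3v4v5; their edge sets are {v1v2,v3v2,v3v4,v4v5}, {v1v2,v3v2,v3v4,v5v4}, {v2v1,v3v2,v3v4,v4v5}, {v1v2,v2v1,v3v2,v3v4,v4v5}, {v1v2,v2v1,v3v2,v3v4,v5v4}, and {v1v2,v2v1,v3v2,v3v4,v4v5,v5v4}. -/
/-- Digraph isomorphism on a fixed vertex set. -/
def QIso {V : Type*} (E E' : V → V → Prop) : Prop :=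
  ∃ φ : Equiv.Perm V, ∀ u v, E u v ↔ E' (φ u) (φ v)

def relOf {n : ℕ} (l : List (Fin n × Fin n)) : Fin n → Fin n → Prop :=
  fun i j => (i, j) ∈ l

/-- The underlying undirected graph is the chordless path v1 v2 ... vn. -/
def isPathUnder {n : ℕ} (E : Fin n → Fin n → Prop) : Prop :=
  ∀ i j : Fin n, QAdj E i j ↔ (i.val + 1 = j.val ∨ j.val + 1 = i.val)

def L4 : List (Fin 5 → Fin 5 → Prop) :=
  [relOf [(0,1),(2,1),(2,3),(3,4)],
   relOf [(0,1),(2,1),(2,3),(4,3)],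
   relOf [(1,0),(2,1),(2,3),(3,4)],
   relOf [(0,1),(1,0),(2,1),(2,3),(3,4)],
   relOf [(0,1),(1,0),(2,1),(2,3),(4,3)],
   relOf [(0,1),(1,0),(2,1),(2,3),(3,4),(4,3)]]

/-!
A digraph whose underlying graph is the path `0 - 1 - ⋯ - n` is determined by how each of
its `n` edges `{k, k + 1}` is oriented: forward, backward, or both ways (`orientedPath`). Every
such digraph is bipartite for the parity colouring, so on five vertices being a 2-qBMG is a
property of one of `3 ^ 4 = 81` orientation vectors, which a computation shows to be one of the
six listed ones up to reversing the path. The six are pairwise non-isomorphic because their pairs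
(number of arcs, number of sources) are `(4, 2)`, `(4, 3)`, `(4, 1)`, `(5, 1)`, `(5, 2)`, `(6, 1)`.
-/

section Decidable

variable {V : Type*} [Fintype V] (E : V → V → Prop) [DecidableRel E]

instance [DecidableEq V] : Decidable (QN1 E) := by unfold QN1; infer_instance

instance : Decidable (QN2 E) := by unfold QN2; infer_instance

instance : Decidable (QN3 E) := by unfold QN3; infer_instance

end Decidable

theorem QIso.refl {V : Type*} (E : V → V → Prop) : QIso E E :=
  ⟨Equiv.refl V, fun _ _ => Iff.rfl⟩

theorem Fin.val_add_one_eq_iff {n : ℕ} {i j : Fin (n + 1)} :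
    i.val + 1 = j.val ↔ ∃ k : Fin n, i = k.castSucc ∧ j = k.succ := by
  constructor
  · intro h
    exact ⟨⟨i, by omega⟩, Fin.ext rfl, Fin.ext (by simp [h])⟩
  · rintro ⟨k, rfl, rfl⟩
    simp

theorem isPathUnder.qBip {n : ℕ} {E : Fin n → Fin n → Prop} (hE : isPathUnder E) :
    QBip (fun i => decide (Even i.val)) E := by
  intro u v huv
  rcases (hE u v).1 (Or.inl huv) with h | h <;>
    simp only [← h, Nat.even_add_one, decide_not] <;> simp

inductive ArcDir
  | fwd
  | bwd
  | both
  deriving DecidableEq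

namespace ArcDir

instance : Fintype ArcDir := ⟨{fwd, bwd, both}, fun d => by cases d <;> decide⟩

def hasFwd : ArcDir → Bool
  | bwd => false
  | _ => true

def hasBwd : ArcDir → Bool
  | fwd => false
  | _ => true

theorem hasFwd_or_hasBwd (d : ArcDir) : d.hasFwd ∨ d.hasBwd := by
  cases d <;> simp [hasFwd, hasBwd]

def ofArcs : Bool → Bool → ArcDir
  | true, false => fwd
  | false, true => bwd
  | _, _ => both

theorem hasFwd_hasBwd_ofArcs {f b : Bool} (h : f ∨ b) :
    (ofArcs f b).hasFwd = f ∧ (ofArcs f b).hasBwd = b := by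
  cases f <;> cases b <;> simp_all [ofArcs, hasFwd, hasBwd]

def flip : ArcDir → ArcDir
  | fwd => bwd
  | bwd => fwd
  | both => both

@[simp]
theorem hasFwd_flip (d : ArcDir) : d.flip.hasFwd = d.hasBwd := by
  cases d <;> rfl

@[simp]
theorem hasBwd_flip (d : ArcDir) : d.flip.hasBwd = d.hasFwd := by
  cases d <;> rfl

end ArcDir

open ArcDir

def orientedPath {n : ℕ} (d : Fin n → ArcDir) (i j : Fin (n + 1)) : Prop :=
  ∃ k, (i = k.castSucc ∧ j = k.succ ∧ (d k).hasFwd) ∨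
    (i = k.succ ∧ j = k.castSucc ∧ (d k).hasBwd)

instance {n : ℕ} (d : Fin n → ArcDir) : DecidableRel (orientedPath d) := by
  unfold orientedPath; infer_instance

theorem isPathUnder_orientedPath {n : ℕ} (d : Fin n → ArcDir) :
    isPathUnder (orientedPath d) := by
  intro i j
  simp only [QAdj, orientedPath, Fin.val_add_one_eq_iff]
  constructor
  · rintro (⟨k, ⟨rfl, rfl, -⟩ | ⟨rfl, rfl, -⟩⟩ | ⟨k, ⟨rfl, rfl, -⟩ | ⟨rfl, rfl, -⟩⟩) <;>
      simp
  · rintro (⟨k, rfl, rfl⟩ | ⟨k, rfl, rfl⟩) <;>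
      rcases (d k).hasFwd_or_hasBwd with h | h <;> grind

theorem exists_orientedPath_eq {n : ℕ} {E : Fin (n + 1) → Fin (n + 1) → Prop}
    (hE : isPathUnder E) : ∃ d : Fin n → ArcDir, orientedPath d = E := by
  classical
  have hdir (k : Fin n) := hasFwd_hasBwd_ofArcs (f := decide (E k.castSucc k.succ))
    (b := decide (E k.succ k.castSucc)) (by simpa [QAdj] using (hE _ _).2 (by simp))
  refine ⟨fun k => ofArcs (E k.castSucc k.succ) (E k.succ k.castSucc), ?_⟩
  funext i j
  apply propext
  simp only [orientedPath, (hdir _).1, (hdir _).2, decide_eq_true_eq]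
  constructor
  · rintro ⟨k, ⟨rfl, rfl, h⟩ | ⟨rfl, rfl, h⟩⟩ <;> exact h
  · intro h
    rcases (hE i j).1 (Or.inl h) with hij | hji
    · obtain ⟨k, rfl, rfl⟩ := Fin.val_add_one_eq_iff.1 hij
      exact ⟨k, Or.inl ⟨rfl, rfl, h⟩⟩
    · obtain ⟨k, rfl, rfl⟩ := Fin.val_add_one_eq_iff.1 hji
      exact ⟨k, Or.inr ⟨rfl, rfl, h⟩⟩

def reverseDirs {n : ℕ} (d : Fin n → ArcDir) : Fin n → ArcDir := fun k => (d k.rev).flip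

theorem qIso_orientedPath_reverseDirs {n : ℕ} (d : Fin n → ArcDir) :
    QIso (orientedPath d) (orientedPath (reverseDirs d)) := by
  refine ⟨Fin.revPerm, fun i j => ?_⟩
  simp only [orientedPath, reverseDirs, Fin.revPerm_apply, hasFwd_flip, hasBwd_flip]
  rw [← Fin.revPerm.exists_congr_right]
  simp [Fin.rev_eq_iff, Fin.rev_castSucc, Fin.rev_succ, or_comm]

section Invariants

variable {V : Type*}

noncomputable def arcCount (E : V → V → Prop) : ℕ := Nat.card {p : V × V // E p.1 p.2}

noncomputable def sourceCount (E : V → V → Prop) : ℕ := Nat.card {v : V // ∀ u, ¬ E u v}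

theorem QIso.arcCount_eq {E E' : V → V → Prop} (h : QIso E E') : arcCount E = arcCount E' := by
  obtain ⟨φ, hφ⟩ := h
  exact Nat.card_congr ((φ.prodCongr φ).subtypeEquiv fun p => hφ p.1 p.2)

theorem QIso.sourceCount_eq {E E' : V → V → Prop} (h : QIso E E') :
    sourceCount E = sourceCount E' := by
  obtain ⟨φ, hφ⟩ := h
  refine Nat.card_congr (φ.subtypeEquiv fun v => ?_)
  simp only [hφ]
  exact φ.forall_congr_right (q := fun u => ¬ E' u (φ v))

end Invariants

def sixDirs : List (Fin 4 → ArcDir) :=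
  [![fwd, bwd, fwd, fwd], ![fwd, bwd, fwd, bwd], ![bwd, bwd, fwd, fwd],
   ![both, bwd, fwd, fwd], ![both, bwd, fwd, bwd], ![both, bwd, fwd, both]]

instance {n : ℕ} (l : List (Fin n × Fin n)) : DecidableRel (relOf l) := by
  unfold relOf; infer_instance

theorem L4_eq_map_orientedPath : L4 = sixDirs.map orientedPath := by
  simp only [L4, sixDirs, List.map_cons, List.map_nil]
  congr <;> funext i j <;> apply propext <;> revert i j <;> decide

theorem sixDirs_invariants_nodup :
    (sixDirs.map fun d => (arcCount (orientedPath d), sourceCount (orientedPath d))).Nodup := by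
  simp only [arcCount, sourceCount, Nat.card_eq_fintype_card]
  decide

set_option maxRecDepth 100000 in
theorem qN_orientedPath_iff_mem_sixDirs (d : Fin 4 → ArcDir) :
    QN1 (orientedPath d) ∧ QN2 (orientedPath d) ∧ QN3 (orientedPath d) ↔
      d ∈ sixDirs ∨ reverseDirs d ∈ sixDirs := by
  revert d
  decide

theorem six_qBMGs_on_P5 :
    (∀ E ∈ L4, (∃ c, IsQBMG c E) ∧ isPathUnder E) ∧
    L4.Pairwise (fun E E' => ¬ QIso E E') ∧
    (∀ E : Fin 5 → Fin 5 → Prop, (∃ c, IsQBMG c E) → isPathUnder E →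
      ∃ E' ∈ L4, QIso E E') := by
  rw [L4_eq_map_orientedPath]
  refine ⟨?_, ?_, ?_⟩
  · simp only [List.forall_mem_map]
    intro d hd
    have hpath := isPathUnder_orientedPath d
    exact ⟨⟨_, hpath.qBip, (qN_orientedPath_iff_mem_sixDirs d).2 (Or.inl hd)⟩, hpath⟩
  · refine List.pairwise_map.2 (List.Pairwise.of_map _ ?_ sixDirs_invariants_nodup)
    intro d d' hne hiso
    exact hne (Prod.ext hiso.arcCount_eq hiso.sourceCount_eq)
  · rintro E ⟨c, -, hqn⟩ hE
    obtain ⟨d, rfl⟩ := exists_orientedPath_eq hE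
    rcases (qN_orientedPath_iff_mem_sixDirs d).1 hqn with hd | hd
    · exact ⟨_, List.mem_map_of_mem hd, QIso.refl _⟩
    · exact ⟨_, List.mem_map_of_mem hd, qIso_orientedPath_reverseDirs d⟩
end

section
/- In any 2-qBMG, there is no induced path v1v2v3v4 in the underlying undirected graph (chordless, so v1v3, v1v4, v2v4 are non-adjacent) with directed edges v1v2 and v2v3 both present. -/
theorem QN2.qAdj_of_path {V : Type*} {E : V → V → Prop} (hN2 : QN2 E) {u v w t : V}
    (huv : E u v) (hvw : E v w) (hwt : E w t) : QAdj E u t :=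
  Or.inl (hN2 u v w t huv hvw hwt)

theorem QN1.qAdj_of_edges {V : Type*} {E : V → V → Prop} (hN1 : QN1 E) {u v w t : V}
    (huv : u ≠ v) (hut : E u t) (hvw : E v w) (htw : E t w) : QAdj E u v := by
  by_contra hn
  exact hN1 u v huv (fun e => hn (Or.inl e)) (fun e => hn (Or.inr e)) ⟨w, t, hut, hvw, htw⟩

theorem no_forward_forward_P4_general {V : Type*} (c : V → Bool) (E : V → V → Prop)
    (h : IsQBMG c E) (v1 v2 v3 v4 : V)
    (h14ne : v1 ≠ v4) (a34 : QAdj E v3 v4) (n14 : ¬ QAdj E v1 v4) :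
    ¬ (E v1 v2 ∧ E v2 v3) := by
  rintro ⟨e12, e23⟩
  obtain ⟨-, hN1, hN2, -⟩ := h
  rcases a34 with e34 | e43
  · exact n14 (hN2.qAdj_of_path e12 e23 e34)
  · exact n14 (hN1.qAdj_of_edges h14ne e12 e43 e23)

theorem no_forward_forward_P4 {V : Type*} (c : V → Bool) (E : V → V → Prop)
    (h : IsQBMG c E) (v1 v2 v3 v4 : V)
    (h12ne : v1 ≠ v2) (h13ne : v1 ≠ v3) (h14ne : v1 ≠ v4)
    (h23ne : v2 ≠ v3) (h24ne : v2 ≠ v4) (h34ne : v3 ≠ v4)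
    (a12 : QAdj E v1 v2) (a23 : QAdj E v2 v3) (a34 : QAdj E v3 v4)
    (n13 : ¬ QAdj E v1 v3) (n14 : ¬ QAdj E v1 v4) (n24 : ¬ QAdj E v2 v4) :
    ¬ (E v1 v2 ∧ E v2 v3) :=
  no_forward_forward_P4_general c E h v1 v2 v3 v4 h14ne a34 n14
end

section
/- Every 2-qBMG on four vertices whose underlying undirected graph is a chordless path on 4 vertices has a sink, i.e., a vertex with empty out-neighborhood. -/
/-! If neither endpoint of the path `0 - 1 - 2 - 3` were a sink, their out-arcs would have to go to
their only neighbours, `0 → 1` and `3 → 2`. As `0` and `3` are non-adjacent, (N1) then forbids any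
arc between `1` and `2`, contradicting the middle edge of the path. -/

theorem QN1.not_qAdj_of_edges {V : Type*} {E : V → V → Prop} (hN1 : QN1 E) {u v t w : V}
    (huv : u ≠ v) (hnadj : ¬ QAdj E u v) (hut : E u t) (hvw : E v w) : ¬ QAdj E t w := by
  have hnuv : ¬ E u v := fun h => hnadj (Or.inl h)
  have hnvu : ¬ E v u := fun h => hnadj (Or.inr h)
  rintro (htw | hwt)
  · exact hN1 u v huv hnuv hnvu ⟨w, t, hut, hvw, htw⟩
  · exact hN1 v u huv.symm hnvu hnuv ⟨t, w, hvw, hut, hwt⟩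

section PathFour

variable {E : Fin 4 → Fin 4 → Prop}

theorem eq_one_of_edge_zero
    (hpath : ∀ i j : Fin 4, QAdj E i j ↔ (i.val + 1 = j.val ∨ j.val + 1 = i.val))
    {w : Fin 4} (h : E 0 w) : w = 1 := by
  have := (hpath 0 w).1 (Or.inl h)
  fin_cases w <;> simp_all

theorem eq_two_of_edge_three
    (hpath : ∀ i j : Fin 4, QAdj E i j ↔ (i.val + 1 = j.val ∨ j.val + 1 = i.val))
    {w : Fin 4} (h : E 3 w) : w = 2 := by
  have := (hpath 3 w).1 (Or.inl h)
  fin_cases w <;> simp_all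

end PathFour

theorem qBMG_P4_has_sink (c : Fin 4 → Bool) (E : Fin 4 → Fin 4 → Prop)
    (h : IsQBMG c E)
    (hpath : ∀ i j : Fin 4, QAdj E i j ↔ (i.val + 1 = j.val ∨ j.val + 1 = i.val)) :
    ∃ v, ∀ w, ¬ E v w := by
  by_contra! hs
  obtain ⟨w₀, hw₀⟩ := hs 0
  obtain ⟨w₃, hw₃⟩ := hs 3
  have h01 : E 0 1 := eq_one_of_edge_zero hpath hw₀ ▸ hw₀
  have h32 : E 3 2 := eq_two_of_edge_three hpath hw₃ ▸ hw₃
  have hn03 : ¬ QAdj E 0 3 := by rw [hpath]; decide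
  exact h.2.1.not_qAdj_of_edges (by decide) hn03 h01 h32 ((hpath 1 2).2 (by decide))
end

section
/- Up to isomorphism, there are exactly ten 2-qBMGs on four vertices {v1,v2,v3,v4} whose underlying undirected graph is the chordless 4-cycle v1v2v3v4v1. -/
/-- The underlying undirected graph is the chordless 4-cycle v1 v2 v3 v4 v1. -/
def isC4Under (E : Fin 4 → Fin 4 → Prop) : Prop :=
  ∀ i j : Fin 4, QAdj E i j ↔ ((i.val + 1) % 4 = j.val ∨ (j.val + 1) % 4 = i.val)

/-! A digraph whose underlying graph is the 4-cycle `0 1 2 3` is one of the `2 ^ 8` sets of arcs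
of that cycle, and it is automatically bipartite for the parity colouring. So a 2-qBMG on the
4-cycle is such an arc set satisfying (N1)–(N3), and the classification is a finite check: every
admissible arc set is isomorphic, by one of the 24 vertex permutations, to one of ten
representatives, and no two representatives are isomorphic. -/

section Decidable

variable {V : Type*} [Fintype V] [DecidableEq V] (E E' : V → V → Prop) [DecidableRel E]
  [DecidableRel E']

instance : Decidable (QN1 E) := by unfold QN1; infer_instance

instance inst_s12 : Decidable (QN2 E) := by unfold QN2; infer_instance

instance inst_s12_2 : Decidable (QN3 E) := by unfold QN3; infer_instance

instance : Decidable (QIso E E') := by unfold QIso; infer_instance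

end Decidable

instance (E : Fin 4 → Fin 4 → Prop) [DecidableRel E] : Decidable (isC4Under E) := by
  unfold isC4Under QAdj; infer_instance

instance inst_s12_3 {n : ℕ} (l : List (Fin n × Fin n)) : DecidableRel (relOf l) :=
  fun i j => inferInstanceAs (Decidable ((i, j) ∈ l))

theorem relOf_filter {n : ℕ} {A : List (Fin n × Fin n)} {E : Fin n → Fin n → Prop}
    [DecidableRel E] (hE : ∀ i j, E i j → (i, j) ∈ A) :
    relOf (A.filter fun a => E a.1 a.2) = E := by
  funext i j
  simp only [relOf, List.mem_filter, decide_eq_true_eq, eq_iff_iff]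
  exact ⟨And.right, fun h => ⟨hE i j h, h⟩⟩

def c4Arcs : List (Fin 4 × Fin 4) := [(0,1), (1,0), (1,2), (2,1), (2,3), (3,2), (3,0), (0,3)]

def c4Parity (i : Fin 4) : Bool := decide (i.val % 2 = 0)

namespace isC4Under

variable {E : Fin 4 → Fin 4 → Prop}

theorem mem_c4Arcs (hE : isC4Under E) {i j : Fin 4} (hij : E i j) : (i, j) ∈ c4Arcs := by
  have hcycle : ∀ i j : Fin 4, (i.val + 1) % 4 = j.val ∨ (j.val + 1) % 4 = i.val →
      (i, j) ∈ c4Arcs := by decide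
  exact hcycle i j ((hE i j).1 (Or.inl hij))

theorem exists_mem_sublists_relOf_eq (hE : isC4Under E) : ∃ l ∈ c4Arcs.sublists, relOf l = E := by
  classical
  exact ⟨_, List.mem_sublists.2 List.filter_sublist, relOf_filter fun _ _ => hE.mem_c4Arcs⟩

theorem qBip_c4Parity (hE : isC4Under E) : QBip c4Parity E := by
  have hcycle : ∀ i j : Fin 4, (i.val + 1) % 4 = j.val ∨ (j.val + 1) % 4 = i.val →
      c4Parity i ≠ c4Parity j := by decide
  exact fun i j hij => hcycle i j ((hE i j).1 (Or.inl hij))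

end isC4Under

def c4Reps : List (List (Fin 4 × Fin 4)) :=
  [ [(1,0), (2,1), (3,0), (3,2)],
    [(1,0), (2,1), (2,3), (3,0)],
    [(0,3), (1,0), (2,1), (2,3), (3,0)],
    [(1,0), (2,1), (2,3), (3,0), (3,2)],
    [(1,0), (1,2), (3,0), (3,2)],
    [(0,3), (1,0), (1,2), (3,0), (3,2)],
    [(0,3), (1,0), (1,2), (2,3), (3,0), (3,2)],
    [(0,3), (1,0), (1,2), (2,1), (2,3), (3,0)],
    [(1,0), (1,2), (2,1), (2,3), (3,0), (3,2)],
    [(0,1), (0,3), (1,0), (1,2), (2,1), (2,3), (3,0), (3,2)] ]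

theorem c4Reps_spec : ∀ l ∈ c4Reps,
    isC4Under (relOf l) ∧ QN1 (relOf l) ∧ QN2 (relOf l) ∧ QN3 (relOf l) := by
  decide

theorem c4Reps_pairwise_not_qIso : c4Reps.Pairwise fun l l' => ¬ QIso (relOf l) (relOf l') := by
  decide +kernel

theorem exists_mem_c4Reps_qIso : ∀ l ∈ c4Arcs.sublists, isC4Under (relOf l) →
    QN1 (relOf l) → QN2 (relOf l) → QN3 (relOf l) → ∃ r ∈ c4Reps, QIso (relOf l) (relOf r) := by
  decide +kernel

theorem ten_qBMGs_on_C4 :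
    ∃ L : List (Fin 4 → Fin 4 → Prop), L.length = 10 ∧
      (∀ E ∈ L, (∃ c, IsQBMG c E) ∧ isC4Under E) ∧
      L.Pairwise (fun E E' => ¬ QIso E E') ∧
      (∀ E : Fin 4 → Fin 4 → Prop, (∃ c, IsQBMG c E) → isC4Under E →
        ∃ E' ∈ L, QIso E E') := by
  refine ⟨c4Reps.map relOf, rfl, ?_, List.pairwise_map.2 c4Reps_pairwise_not_qIso, ?_⟩
  · simp only [List.forall_mem_map]
    intro l hl
    obtain ⟨hC4, hN1, hN2, hN3⟩ := c4Reps_spec l hl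
    exact ⟨⟨c4Parity, hC4.qBip_c4Parity, hN1, hN2, hN3⟩, hC4⟩
  · rintro E ⟨-, -, hN1, hN2, hN3⟩ hC4
    obtain ⟨l, hl, rfl⟩ := hC4.exists_mem_sublists_relOf_eq
    obtain ⟨r, hr, hiso⟩ := exists_mem_c4Reps_qIso l hl hC4 hN1 hN2 hN3
    exact ⟨relOf r, List.mem_map_of_mem hr, hiso⟩
end

section
/- Let G be a digraph satisfying the bi-transitivity axiom (N2), and let Γ be an orientation of G that admits a topological ordering (its vertices can be labeled v1,...,vn so that every edge vivj of Γ has i < j). Let Δ be the subdigraph of Γ induced on a vertex set T ∪ Z whose underlying undirected graph is a complete bipartite graph (biclique). Then Δ satisfies (N1) and (N2). -/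
/-! (N1) holds in a biclique because non-adjacent vertices lie on the same side, so the
out-neighbours `t` of `u` and `w` of `v` lie together on the other side and cannot be adjacent.
(N2) holds in an acyclic orientation `Γ` of an (N2)-digraph `E`: a path `u → v → w → t` in `Γ`
gives the edge `ut` of `E`, which `Γ` must orient as `u → t`, since `t → u` would close a cycle. -/

theorem QN1.of_qAdj_iff_xor {W : Type*} {R : W → W → Prop} (P : W → Prop)
    (hadj : ∀ u v, QAdj R u v ↔ Xor (P u) (P v)) : QN1 R := by
  rintro u v - hnuv hnvu ⟨w, t, hut, hvw, htw⟩
  have huv : ¬ Xor (P u) (P v) := (hadj u v).not.mp (not_or.mpr ⟨hnuv, hnvu⟩)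
  have hut := (hadj u t).mp (Or.inl hut)
  have hvw := (hadj v w).mp (Or.inl hvw)
  have htw := (hadj t w).mp (Or.inl htw)
  rw [xor_def] at huv hut hvw htw
  tauto

theorem QN2.comap {V W : Type*} {R : V → V → Prop} (hR : QN2 R) (g : W → V) :
    QN2 (fun a b => R (g a) (g b)) :=
  fun _ _ _ _ => hR _ _ _ _

theorem QN2.of_orientation {V α : Type*} [Preorder α] {E Γ : V → V → Prop} (hN2 : QN2 E)
    (hsub : ∀ u v, Γ u v → E u v) (hcover : ∀ u v, E u v → Γ u v ∨ Γ v u)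
    (f : V → α) (htopo : ∀ u v, Γ u v → f u < f v) : QN2 Γ := by
  intro u v w t huv hvw hwt
  have hut : f u < f t := (htopo _ _ huv).trans ((htopo _ _ hvw).trans (htopo _ _ hwt))
  refine (hcover u t (hN2 u v w t (hsub _ _ huv) (hsub _ _ hvw) (hsub _ _ hwt))).resolve_right ?_
  exact fun htu => (htopo _ _ htu).asymm hut

theorem Set.mem_and_mem_or_mem_and_mem_iff_xor {V : Type*} {T Z : Set V} (hdisj : Disjoint T Z)
    {u v : V} (hu : u ∈ T ∪ Z) (hv : v ∈ T ∪ Z) :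
    ((u ∈ T ∧ v ∈ Z) ∨ (u ∈ Z ∧ v ∈ T)) ↔ Xor (u ∈ T) (v ∈ T) := by
  have hu' : u ∈ T → u ∉ Z := fun h => Set.disjoint_left.mp hdisj h
  have hv' : v ∈ T → v ∉ Z := fun h => Set.disjoint_left.mp hdisj h
  rw [Set.mem_union] at hu hv
  rw [xor_def]
  tauto

theorem biclique_orientation_N1_N2_general {V : Type*} (E Γ : V → V → Prop)
    (hN2 : QN2 E)
    (hsub : ∀ u v, Γ u v → E u v)
    (hcover : ∀ u v, E u v → Γ u v ∨ Γ v u)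
    (f : V → ℕ) (htopo : ∀ u v, Γ u v → f u < f v)
    (T Z : Set V) (hdisj : Disjoint T Z)
    (hbic : ∀ u ∈ T ∪ Z, ∀ v ∈ T ∪ Z,
      (QAdj Γ u v ↔ ((u ∈ T ∧ v ∈ Z) ∨ (u ∈ Z ∧ v ∈ T)))) :
    QN1 (fun u v : (T ∪ Z : Set V) => Γ u.val v.val) ∧
    QN2 (fun u v : (T ∪ Z : Set V) => Γ u.val v.val) :=
  ⟨QN1.of_qAdj_iff_xor (fun u => u.val ∈ T) fun u v =>
      (hbic u u.2 v v.2).trans (Set.mem_and_mem_or_mem_and_mem_iff_xor hdisj u.2 v.2),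
    (QN2.of_orientation hN2 hsub hcover f htopo).comap Subtype.val⟩

theorem biclique_orientation_N1_N2 {V : Type*} (E Γ : V → V → Prop)
    (hN2 : QN2 E)
    (hsub : ∀ u v, Γ u v → E u v)
    (horient : ∀ u v, Γ u v → ¬ Γ v u)
    (hcover : ∀ u v, E u v → Γ u v ∨ Γ v u)
    (f : V → ℕ) (htopo : ∀ u v, Γ u v → f u < f v)
    (T Z : Set V) (hdisj : Disjoint T Z)
    (hbic : ∀ u ∈ T ∪ Z, ∀ v ∈ T ∪ Z,
      (QAdj Γ u v ↔ ((u ∈ T ∧ v ∈ Z) ∨ (u ∈ Z ∧ v ∈ T)))) :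
    QN1 (fun u v : (T ∪ Z : Set V) => Γ u.val v.val) ∧
    QN2 (fun u v : (T ∪ Z : Set V) => Γ u.val v.val) :=
  biclique_orientation_N1_N2_general E Γ hN2 hsub hcover f htopo T Z hdisj hbic
end

section
/- Let Γ be an oriented bipartite digraph that is a bitournament (for any two vertices u,w in different color classes, exactly one of uw, wu is an edge) and satisfies bi-transitivity (N2). Then Γ is acyclic: it contains no directed cycle. -/
/-! By (N2) three consecutive edges can be replaced by one, so every walk shortens to a walk of
length 1 or 2. A closed walk would thus give a loop or a pair of symmetric edges. -/

theorem QN2.rel_or_exists_of_transGen {V : Type*} {E : V → V → Prop} (hE : QN2 E) {u v : V}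
    (h : Relation.TransGen E u v) : E u v ∨ ∃ w, E u w ∧ E w v := by
  induction h with
  | single huv => exact .inl huv
  | tail _ hvw ih =>
    rcases ih with huv | ⟨x, hux, hxv⟩
    · exact .inr ⟨_, huv, hvw⟩
    · exact .inl (hE _ _ _ _ hux hxv hvw)

theorem QN2.not_transGen_self {V : Type*} {E : V → V → Prop} (hE : QN2 E)
    (hasymm : ∀ u v, E u v → ¬ E v u) (v : V) : ¬ Relation.TransGen E v v := fun h => by
  rcases hE.rel_or_exists_of_transGen h with hvv | ⟨w, hvw, hwv⟩
  · exact hasymm v v hvv hvv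
  · exact hasymm v w hvw hwv

theorem bitransitive_bitournament_acyclic_general {V : Type*} (Γ : V → V → Prop)
    (horient : ∀ u v, Γ u v → ¬ Γ v u)
    (hN2 : QN2 Γ) :
    ∀ v, ¬ Relation.TransGen Γ v v :=
  hN2.not_transGen_self horient

theorem bitransitive_bitournament_acyclic {V : Type*} (Γ : V → V → Prop)
    (c : V → Bool)
    (hbip : ∀ u v, Γ u v → c u ≠ c v)
    (horient : ∀ u v, Γ u v → ¬ Γ v u)
    (htour : ∀ u v, c u ≠ c v → Γ u v ∨ Γ v u)
    (hN2 : QN2 Γ) :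
    ∀ v, ¬ Relation.TransGen Γ v v :=
  bitransitive_bitournament_acyclic_general Γ horient hN2
end
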